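/- arXiv:1407.5740 — 4 statements merged into one kernel-verified Lean document; each statement's English description precedes it below -/
import Mathlib

section
/- Let ρ, W, Ũ : [ε, T) → ℝ be C¹ solutions of ρ' = (c_l - 2)ρ/Ũ, W' = (c_l - 2)ρ/Ũ² - W/Ũ, (Ũ(ξ)/ξ)' = W(ξ)/ξ with c_l > 2, ε > 0, and initial data satisfying Ũ(ε) > 0, W(ε) > 0, ρ(ε) > 0. Then W(ξ) > 0 and ρ(ξ) > 0 for all ξ ∈ [ε, T). -/
/-!
A function that is positive at `ε` and continuous on `[ε, T)` can only lose positivity at a first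
zero. `Ũ` (`Yu`) has none, since it never vanishes; it is continuous because `Ũ/ξ` is
differentiable and `ξ ≥ ε > 0`. Hence `ρ' = (c_l - 2) ρ / Ũ ≥ 0` wherever `ρ > 0`, so `ρ` is
nondecreasing up to any first zero and therefore has none. At a first zero of `W` we would get
`W' = (c_l - 2) ρ / Ũ² > 0`, while `W` decreases to `0` from the left.
-/

open Set Filter Topology

theorem ContinuousAt.of_div_id {𝕜 : Type*} [NormedField 𝕜] {f : 𝕜 → 𝕜} {x : 𝕜}
    (hf : ContinuousAt (fun y => f y / y) x) (hx : x ≠ 0) : ContinuousAt f x := by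
  refine (hf.mul continuousAt_id).congr ?_
  filter_upwards [eventually_ne_nhds hx] with y hy
  exact div_mul_cancel₀ (f y) hy

theorem HasDerivAt.nonpos_of_isMinOn_Ioc {f : ℝ → ℝ} {f' a x : ℝ} (hf : HasDerivAt f f' x)
    (hax : a < x) (hmin : IsMinOn f (Ioc a x) x) : f' ≤ 0 := by
  have hslope : Tendsto (slope f x) (𝓝[<] x) (𝓝 f') :=
    (hasDerivAt_iff_tendsto_slope.mp hf).mono_left (nhdsWithin_mono x fun y hy => ne_of_lt hy)
  refine le_of_tendsto hslope ?_
  filter_upwards [Ioo_mem_nhdsLT hax] with y hy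
  rw [slope_def_field]
  exact div_nonpos_of_nonneg_of_nonpos (sub_nonneg.mpr (hmin ⟨hy.1, hy.2.le⟩))
    (sub_nonpos.mpr hy.2.le)

theorem exists_first_zero_of_continuousOn_Icc {f : ℝ → ℝ} {a b : ℝ} (hab : a ≤ b)
    (hf : ContinuousOn f (Icc a b)) (ha : 0 < f a) (hb : f b ≤ 0) :
    ∃ z ∈ Ioc a b, f z = 0 ∧ ∀ y ∈ Ico a z, 0 < f y := by
  have hzero_mem : ∀ c ∈ Icc a b, f c ≤ 0 → ∃ w ∈ Icc a c, f w = 0 := fun c hc hfc =>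
    intermediate_value_Icc' hc.1 (hf.mono (Icc_subset_Icc_right hc.2)) ⟨hfc, ha.le⟩
  set Z := Icc a b ∩ f ⁻¹' {0}
  have hZ_closed : IsClosed Z := hf.preimage_isClosed_of_isClosed isClosed_Icc isClosed_singleton
  have hZ_ne : Z.Nonempty :=
    let ⟨w, hw, hfw⟩ := hzero_mem b ⟨hab, le_rfl⟩ hb
    ⟨w, hw, hfw⟩
  have hZ_bdd : BddBelow Z := ⟨a, fun y hy => hy.1.1⟩
  obtain ⟨⟨hza, hzb⟩, hfz⟩ := hZ_closed.csInf_mem hZ_ne hZ_bdd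
  have haz : a < sInf Z := hza.lt_of_ne fun h => ha.ne' (by rwa [h])
  refine ⟨sInf Z, ⟨haz, hzb⟩, hfz, fun y hy => ?_⟩
  by_contra! hfy
  obtain ⟨w, hw, hfw⟩ := hzero_mem y ⟨hy.1, hy.2.le.trans hzb⟩ hfy
  have : sInf Z ≤ w := csInf_le hZ_bdd ⟨⟨hw.1, hw.2.trans (hy.2.le.trans hzb)⟩, hfw⟩
  linarith [hw.2, hy.2]

theorem ContinuousOn.pos_on_Ico_of_first_zero_ne {f : ℝ → ℝ} {a b : ℝ}
    (hf : ContinuousOn f (Ico a b)) (ha : 0 < f a)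
    (hfirst : ∀ x ∈ Ioo a b, (∀ y ∈ Ico a x, 0 < f y) → f x ≠ 0) :
    ∀ x ∈ Ico a b, 0 < f x := by
  intro x hx
  by_contra! hfx
  obtain ⟨z, hz, hfz, hbefore⟩ := exists_first_zero_of_continuousOn_Icc hx.1
    (hf.mono fun y hy => ⟨hy.1, hy.2.trans_lt hx.2⟩) ha hfx
  exact hfirst z ⟨hz.1, hz.2.trans_lt hx.2⟩ hbefore hfz

theorem pos_on_Ico_of_hasDerivAt_nonneg_of_pos {f f' : ℝ → ℝ} {a b : ℝ}
    (hf : ∀ x ∈ Ico a b, HasDerivAt f (f' x) x) (ha : 0 < f a)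
    (hf' : ∀ x ∈ Ico a b, 0 < f x → 0 ≤ f' x) : ∀ x ∈ Ico a b, 0 < f x := by
  refine ContinuousOn.pos_on_Ico_of_first_zero_ne
    (fun x hx => (hf x hx).continuousAt.continuousWithinAt) ha fun x hx hbefore => ?_
  have hsub : Icc a x ⊆ Ico a b := fun y hy => ⟨hy.1, hy.2.trans_lt hx.2⟩
  have hmono : MonotoneOn f (Icc a x) := by
    refine monotoneOn_of_hasDerivWithinAt_nonneg (convex_Icc a x)
      (fun y hy => (hf y (hsub hy)).continuousAt.continuousWithinAt)
      (fun y hy => (hf y (hsub (interior_subset hy))).hasDerivWithinAt) fun y hy => ?_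
    rw [interior_Icc] at hy
    exact hf' y (hsub (Ioo_subset_Icc_self hy)) (hbefore y (Ioo_subset_Ico_self hy))
  exact (ha.trans_le (hmono (left_mem_Icc.2 hx.1.le) (right_mem_Icc.2 hx.1.le) hx.1.le)).ne'

theorem pos_on_Ico_of_hasDerivAt_pos_of_eq_zero {f f' : ℝ → ℝ} {a b : ℝ}
    (hf : ∀ x ∈ Ico a b, HasDerivAt f (f' x) x) (ha : 0 < f a)
    (hf' : ∀ x ∈ Ioo a b, f x = 0 → 0 < f' x) : ∀ x ∈ Ico a b, 0 < f x := by
  refine ContinuousOn.pos_on_Ico_of_first_zero_ne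
    (fun x hx => (hf x hx).continuousAt.continuousWithinAt) ha fun x hx hbefore hfx => ?_
  have hmin : IsMinOn f (Ioc a x) x := isMinOn_iff.mpr fun y hy => by
    rcases hy.2.lt_or_eq with hyx | rfl
    · exact hfx ▸ (hbefore y ⟨hy.1.le, hyx⟩).le
    · exact le_rfl
  exact (hf' x hx hfx).not_ge ((hf x (Ioo_subset_Ico_self hx)).nonpos_of_isMinOn_Ioc hx.1 hmin)

theorem stmt6_general (cl ε T : ℝ) (hcl : 2 < cl) (hε : 0 < ε)
    (ρ W Yu : ℝ → ℝ) (ρ' W' : ℝ → ℝ)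
    (hYune : ∀ ξ ∈ Set.Ico ε T, Yu ξ ≠ 0)
    (hρ : ∀ ξ ∈ Set.Ico ε T, HasDerivAt ρ (ρ' ξ) ξ ∧ ρ' ξ = (cl - 2) * ρ ξ / Yu ξ)
    (hW : ∀ ξ ∈ Set.Ico ε T, HasDerivAt W (W' ξ) ξ ∧
      W' ξ = (cl - 2) * ρ ξ / (Yu ξ) ^ 2 - W ξ / Yu ξ)
    (hU : ∀ ξ ∈ Set.Ico ε T, HasDerivAt (fun x => Yu x / x) (W ξ / ξ) ξ)
    (hU0 : 0 < Yu ε) (hW0 : 0 < W ε) (hρ0 : 0 < ρ ε) :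
    ∀ ξ ∈ Set.Ico ε T, 0 < W ξ ∧ 0 < ρ ξ := by
  have hcl' : 0 < cl - 2 := sub_pos.mpr hcl
  have hYu_pos : ∀ ξ ∈ Ico ε T, 0 < Yu ξ :=
    ContinuousOn.pos_on_Ico_of_first_zero_ne
      (fun x hx => ((hU x hx).continuousAt.of_div_id (hε.trans_le hx.1).ne').continuousWithinAt)
      hU0 fun x hx _ => hYune x (Ioo_subset_Ico_self hx)
  have hρ_pos : ∀ ξ ∈ Ico ε T, 0 < ρ ξ :=
    pos_on_Ico_of_hasDerivAt_nonneg_of_pos (fun x hx => (hρ x hx).1) hρ0 fun x hx hρx => by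
      rw [(hρ x hx).2]
      exact (div_pos (mul_pos hcl' hρx) (hYu_pos x hx)).le
  have hW_pos : ∀ ξ ∈ Ico ε T, 0 < W ξ :=
    pos_on_Ico_of_hasDerivAt_pos_of_eq_zero (fun x hx => (hW x hx).1) hW0 fun x hx hWx => by
      have hx : x ∈ Ico ε T := Ioo_subset_Ico_self hx
      rw [(hW x hx).2, hWx, zero_div, sub_zero]
      exact div_pos (mul_pos hcl' (hρ_pos x hx)) (pow_pos (hYu_pos x hx) 2)
  exact fun ξ hξ => ⟨hW_pos ξ hξ, hρ_pos ξ hξ⟩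

/-- For C¹ solutions of the extended self-similar ODE system on [ε, T) with
positive initial data, W and ρ stay positive on [ε, T). -/
theorem stmt6 (cl ε T : ℝ) (hcl : 2 < cl) (hε : 0 < ε) (hεT : ε < T)
    (ρ W Yu : ℝ → ℝ) (ρ' W' : ℝ → ℝ)
    (hρC1 : ContinuousOn ρ' (Set.Ico ε T)) (hWC1 : ContinuousOn W' (Set.Ico ε T))
    (hYune : ∀ ξ ∈ Set.Ico ε T, Yu ξ ≠ 0)
    (hρ : ∀ ξ ∈ Set.Ico ε T, HasDerivAt ρ (ρ' ξ) ξ ∧ ρ' ξ = (cl - 2) * ρ ξ / Yu ξ)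
    (hW : ∀ ξ ∈ Set.Ico ε T, HasDerivAt W (W' ξ) ξ ∧
      W' ξ = (cl - 2) * ρ ξ / (Yu ξ) ^ 2 - W ξ / Yu ξ)
    (hU : ∀ ξ ∈ Set.Ico ε T, HasDerivAt (fun x => Yu x / x) (W ξ / ξ) ξ)
    (hU0 : 0 < Yu ε) (hW0 : 0 < W ε) (hρ0 : 0 < ρ ε) :
    ∀ ξ ∈ Set.Ico ε T, 0 < W ξ ∧ 0 < ρ ξ :=
  stmt6_general cl ε T hcl hε ρ W Yu ρ' W' hYune hρ hW hU hU0 hW0 hρ0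
end

section
/- Let c_l > 2, ε > 0, and let ρ, W, Ũ solve on [ε, T) the system ρ' = (c_l-2)ρ/Ũ, W' = (c_l-2)ρ/Ũ² - W/Ũ, (Ũ/ξ)' = W/ξ with Ũ(ε) > 0, W > 0 and ρ > 0 on [ε, T). Then there exist positive constants C₀, C₁, C₂, C₄ such that for all ξ ∈ [ε, T): Ũ(ξ) ≥ C₀ξ, ρ(ξ) ≤ C₂ξ^{C₁}, and W(ξ) ≤ C₄ξ^{C₁}. -/
/-!
Since `(Ũ/ξ)' = W/ξ > 0`, the ratio `Ũ/ξ` increases, so `Ũ ≥ C₀ ξ` with `C₀ = Ũ(ε)/ε`. Hence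
`(log ρ)' = (c_l - 2)/Ũ ≤ C₁/ξ` with `C₁ = (c_l - 2)/C₀`, so `ρ ξ^{-C₁}` decreases. Finally `ρ' ≥ 0`
and `Ũ ≥ Ũ(ε)` give `W' ≤ ρ'/Ũ ≤ ρ'/Ũ(ε)`, so `W - ρ/Ũ(ε)` decreases and `W` inherits the bound on `ρ`.
-/

open Set Real

variable {s : Set ℝ} {f f' g g' : ℝ → ℝ}

lemma monotoneOn_of_forall_hasDerivAt_nonneg (hs : Convex ℝ s)
    (hf : ∀ x ∈ s, HasDerivAt f (f' x) x) (hf' : ∀ x ∈ s, 0 ≤ f' x) : MonotoneOn f s :=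
  monotoneOn_of_hasDerivWithinAt_nonneg hs (fun x hx => (hf x hx).continuousAt.continuousWithinAt)
    (fun x hx => (hf x (interior_subset hx)).hasDerivWithinAt)
    (fun x hx => hf' x (interior_subset hx))

lemma antitoneOn_of_forall_hasDerivAt_nonpos (hs : Convex ℝ s)
    (hf : ∀ x ∈ s, HasDerivAt f (f' x) x) (hf' : ∀ x ∈ s, f' x ≤ 0) : AntitoneOn f s :=
  antitoneOn_of_hasDerivWithinAt_nonpos hs (fun x hx => (hf x hx).continuousAt.continuousWithinAt)
    (fun x hx => (hf x (interior_subset hx)).hasDerivWithinAt)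
    (fun x hx => hf' x (interior_subset hx))

lemma le_add_div_of_forall_hasDerivAt_le_div {u : ℝ} (hs : Convex ℝ s)
    (hf : ∀ x ∈ s, HasDerivAt f (f' x) x) (hg : ∀ x ∈ s, HasDerivAt g (g' x) x)
    (hg0 : ∀ x ∈ s, 0 ≤ g x) (hu : 0 < u) (hfg : ∀ x ∈ s, f' x ≤ g' x / u) {a x : ℝ}
    (ha : a ∈ s) (hx : x ∈ s) (hax : a ≤ x) : f x ≤ f a + g x / u := by
  have := antitoneOn_of_forall_hasDerivAt_nonpos (f := fun y => f y - g y / u) hs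
    (fun y hy => (hf y hy).sub ((hg y hy).div_const u))
    (fun y hy => sub_nonpos.2 (hfg y hy)) ha hx hax
  linarith [div_nonneg (hg0 a ha) hu.le]

lemma div_mul_le_of_forall_hasDerivAt_div_nonneg (hs : Convex ℝ s) (hs0 : ∀ x ∈ s, 0 < x)
    (hf : ∀ x ∈ s, HasDerivAt (fun x => f x / x) (f' x) x) (hf' : ∀ x ∈ s, 0 ≤ f' x) {a x : ℝ}
    (ha : a ∈ s) (hx : x ∈ s) (hax : a ≤ x) : f a / a * x ≤ f x :=
  (le_div_iff₀ (hs0 x hx)).1 (monotoneOn_of_forall_hasDerivAt_nonneg hs hf hf' ha hx hax)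

lemma le_div_rpow_mul_rpow_of_hasDerivAt_le {C : ℝ} (hs : Convex ℝ s) (hs0 : ∀ x ∈ s, 0 < x)
    (hf0 : ∀ x ∈ s, 0 < f x) (hf : ∀ x ∈ s, HasDerivAt f (f' x) x)
    (hf' : ∀ x ∈ s, f' x ≤ C * f x / x) {a x : ℝ} (ha : a ∈ s) (hx : x ∈ s) (hax : a ≤ x) :
    f x ≤ f a / a ^ C * x ^ C := by
  have hlog : log (f x) - C * log x ≤ log (f a) - C * log a := by
    refine antitoneOn_of_forall_hasDerivAt_nonpos (f' := fun y => f' y / f y - C * y⁻¹) hs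
      (fun y hy => ((hf y hy).log (hf0 y hy).ne').sub
        ((hasDerivAt_log (hs0 y hy).ne').const_mul C)) (fun y hy => ?_) ha hx hax
    rw [sub_nonpos, div_le_iff₀ (hf0 y hy)]
    calc f' y ≤ C * f y / y := hf' y hy
      _ = C * y⁻¹ * f y := by ring
  calc f x = exp (log (f x)) := (exp_log (hf0 x hx)).symm
    _ ≤ exp (log (f a) - C * log a + C * log x) := exp_le_exp.2 (by linarith)
    _ = f a / a ^ C * x ^ C := by
      rw [exp_add, exp_sub, exp_log (hf0 a ha), rpow_def_of_pos (hs0 a ha),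
        rpow_def_of_pos (hs0 x hx), mul_comm C, mul_comm C]

lemma sub_div_le_div_div_of_le {k r w u u₀ : ℝ} (hk : 0 ≤ k) (hr : 0 ≤ r) (hw : 0 < w)
    (hu₀ : 0 < u₀) (hu : u₀ ≤ u) : k * r / u ^ 2 - w / u ≤ k * r / u / u₀ := by
  have hu0 : 0 < u := hu₀.trans_le hu
  calc k * r / u ^ 2 - w / u ≤ k * r / u / u := by
        rw [div_div, ← sq]; linarith [div_pos hw hu0]
    _ ≤ k * r / u / u₀ := div_le_div_of_nonneg_left (by positivity) hu₀ hu

lemma le_div_rpow_mul_rpow {c a x C : ℝ} (hc : 0 ≤ c) (ha : 0 < a) (hax : a ≤ x) (hC : 0 ≤ C) :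
    c ≤ c / a ^ C * x ^ C := by
  rw [div_mul_eq_mul_div, le_div_iff₀ (rpow_pos_of_pos ha C)]
  exact mul_le_mul_of_nonneg_left (rpow_le_rpow ha.le hax hC) hc

/-- A priori growth estimates for the extended self-similar profiles:
Ũ grows at least linearly, while ρ and W grow at most polynomially. -/
theorem stmt7 (cl ε T : ℝ) (hcl : 2 < cl) (hε : 0 < ε) (hεT : ε < T)
    (ρ W Yu : ℝ → ℝ) (ρ' W' : ℝ → ℝ)
    (hρ : ∀ ξ ∈ Set.Ico ε T, HasDerivAt ρ (ρ' ξ) ξ ∧ ρ' ξ = (cl - 2) * ρ ξ / Yu ξ)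
    (hW : ∀ ξ ∈ Set.Ico ε T, HasDerivAt W (W' ξ) ξ ∧
      W' ξ = (cl - 2) * ρ ξ / (Yu ξ) ^ 2 - W ξ / Yu ξ)
    (hU : ∀ ξ ∈ Set.Ico ε T, HasDerivAt (fun x => Yu x / x) (W ξ / ξ) ξ)
    (hU0 : 0 < Yu ε)
    (hWpos : ∀ ξ ∈ Set.Ico ε T, 0 < W ξ) (hρpos : ∀ ξ ∈ Set.Ico ε T, 0 < ρ ξ) :
    ∃ C0 C1 C2 C4 : ℝ, 0 < C0 ∧ 0 < C1 ∧ 0 < C2 ∧ 0 < C4 ∧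
      ∀ ξ ∈ Set.Ico ε T, C0 * ξ ≤ Yu ξ ∧ ρ ξ ≤ C2 * ξ ^ C1 ∧ W ξ ≤ C4 * ξ ^ C1 := by
  have hs : Convex ℝ (Ico ε T) := convex_Ico ε T
  have hs0 : ∀ x ∈ Ico ε T, 0 < x := fun x hx => hε.trans_le hx.1
  have hεs : ε ∈ Ico ε T := ⟨le_rfl, hεT⟩
  set C0 := Yu ε / ε
  set C1 := (cl - 2) / C0
  have hC0 : 0 < C0 := div_pos hU0 hε
  have hC1 : 0 < C1 := div_pos (by linarith) hC0
  have hYu : ∀ ξ ∈ Ico ε T, C0 * ξ ≤ Yu ξ := fun ξ hξ =>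
    div_mul_le_of_forall_hasDerivAt_div_nonneg hs hs0 hU
      (fun x hx => (div_pos (hWpos x hx) (hs0 x hx)).le) hεs hξ hξ.1
  have hYu_ge : ∀ ξ ∈ Ico ε T, Yu ε ≤ Yu ξ := fun ξ hξ =>
    calc Yu ε = C0 * ε := (div_mul_cancel₀ _ hε.ne').symm
      _ ≤ C0 * ξ := mul_le_mul_of_nonneg_left hξ.1 hC0.le
      _ ≤ Yu ξ := hYu ξ hξ
  have hρ'_le : ∀ x ∈ Ico ε T, ρ' x ≤ C1 * ρ x / x := fun x hx =>
    calc ρ' x = (cl - 2) * ρ x / Yu x := (hρ x hx).2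
      _ ≤ (cl - 2) * ρ x / (C0 * x) := div_le_div_of_nonneg_left
          (mul_nonneg (by linarith) (hρpos x hx).le) (mul_pos hC0 (hs0 x hx)) (hYu x hx)
      _ = C1 * ρ x / x := by ring
  have hρ_le : ∀ ξ ∈ Ico ε T, ρ ξ ≤ ρ ε / ε ^ C1 * ξ ^ C1 := fun ξ hξ =>
    le_div_rpow_mul_rpow_of_hasDerivAt_le hs hs0 hρpos (fun x hx => (hρ x hx).1) hρ'_le
      hεs hξ hξ.1
  have hW'_le : ∀ x ∈ Ico ε T, W' x ≤ ρ' x / Yu ε := fun x hx => by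
    rw [(hW x hx).2, (hρ x hx).2]
    exact sub_div_le_div_div_of_le (by linarith) (hρpos x hx).le (hWpos x hx) hU0 (hYu_ge x hx)
  have hC2 : 0 < ρ ε / ε ^ C1 := div_pos (hρpos ε hεs) (rpow_pos_of_pos hε C1)
  refine ⟨C0, C1, ρ ε / ε ^ C1, W ε / ε ^ C1 + ρ ε / ε ^ C1 / Yu ε, hC0, hC1, hC2,
    add_pos (div_pos (hWpos ε hεs) (rpow_pos_of_pos hε C1)) (div_pos hC2 hU0),
    fun ξ hξ => ⟨hYu ξ hξ, hρ_le ξ hξ, ?_⟩⟩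
  calc W ξ ≤ W ε + ρ ξ / Yu ε :=
        le_add_div_of_forall_hasDerivAt_le_div hs (fun x hx => (hW x hx).1)
          (fun x hx => (hρ x hx).1) (fun x hx => (hρpos x hx).le) hU0 hW'_le hεs hξ hξ.1
    _ ≤ W ε / ε ^ C1 * ξ ^ C1 + ρ ε / ε ^ C1 * ξ ^ C1 / Yu ε := by
      gcongr
      exacts [le_div_rpow_mul_rpow (hWpos ε hεs).le hε hξ.1 hC1.le, hρ_le ξ hξ]
    _ = (W ε / ε ^ C1 + ρ ε / ε ^ C1 / Yu ε) * ξ ^ C1 := by ring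
end

section
/- Let c_l > 2 and suppose Û, Ŵ, ρ̂ : (0, ∞) → ℝ solve ρ̂' = (2/c_l - 1)ρ̂Û/(η(1 + Û/c_l)), Ŵ' = -Ŵ/(η(1 + Û/c_l)) + (1 - 2/c_l)ρ̂/((1 + Û/c_l)²η³), Û' = c_lŴ/η, with Ŵ > 0, ρ̂ > 0, Û increasing, and suppose Û(η) ≤ -2 for all η > 0. Then a contradiction follows; in particular lim_{η→∞} Û(η) > -2 whenever the limit exists. -/
/-!
The denominator `s = 1 + Û / c_l` never vanishes, so it has constant sign on `(0, ∞)`.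
If `s < 0`, both terms of `Ŵ'` are positive, so `Ŵ ≥ Ŵ 1 > 0` on `[1, ∞)`. If `s > 0`, then
`Û ≤ -2` gives `η ρ̂' ≥ 2 ρ̂`, so `ρ̂ ≥ ρ̂ 1 η²`; and since the damping term of the `Ŵ`-equation
is exactly `-(log s)'`, we get `(Ŵ + log s)' ≥ c / η` with `log s ≤ log (1 - 2 / c_l)`, so
`Ŵ → ∞`. Either way `Ŵ ≥ δ > 0` eventually, and then `Û' = c_l Ŵ / η ≥ c_l δ / η` makes `Û`
grow logarithmically, contradicting `Û ≤ -2`.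
-/

open Set Filter Real

lemma IsPreconnected.forall_neg_or_forall_pos {X : Type*} [TopologicalSpace X] {s : Set X}
    (hs : IsPreconnected s) {f : X → ℝ} (hf : ContinuousOn f s) (h0 : ∀ x ∈ s, f x ≠ 0) :
    (∀ x ∈ s, f x < 0) ∨ ∀ x ∈ s, 0 < f x := by
  by_contra! h
  obtain ⟨⟨a, ha, hfa⟩, ⟨b, hb, hfb⟩⟩ := h
  obtain ⟨x, hx, hfx⟩ := hs.intermediate_value hb ha hf ⟨hfb, hfa⟩
  exact h0 x hx hfx

lemma monotoneOn_Ici_of_hasDerivAt_nonneg {f f' : ℝ → ℝ} {a : ℝ}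
    (hf : ∀ x ∈ Ici a, HasDerivAt f (f' x) x) (hf' : ∀ x ∈ Ioi a, 0 ≤ f' x) :
    MonotoneOn f (Ici a) :=
  monotoneOn_of_hasDerivWithinAt_nonneg (convex_Ici a)
    (fun x hx => (hf x hx).continuousAt.continuousWithinAt)
    (by simpa only [interior_Ici] using fun x hx => (hf x (mem_Ici_of_Ioi hx)).hasDerivWithinAt)
    (by simpa only [interior_Ici] using hf')

lemma tendsto_atTop_of_div_le_hasDerivAt {f f' : ℝ → ℝ} {c : ℝ} (hc : 0 < c)
    (h : ∀ᶠ x in atTop, HasDerivAt f (f' x) x ∧ c / x ≤ f' x) :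
    Tendsto f atTop atTop := by
  obtain ⟨a, ha⟩ := eventually_atTop.1 (h.and (eventually_gt_atTop 0))
  have hmono : MonotoneOn (fun x => f x - c * log x) (Ici a) :=
    monotoneOn_Ici_of_hasDerivAt_nonneg
      (fun x hx => (ha x hx).1.1.sub ((hasDerivAt_log (ha x hx).2.ne').const_mul c))
      (fun x hx => by simpa [← div_eq_mul_inv] using (ha x (mem_Ici_of_Ioi hx)).1.2)
  refine tendsto_atTop_mono' atTop ?_
    (tendsto_atTop_add_const_left _ (f a - c * log a) (tendsto_log_atTop.const_mul_atTop hc))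
  filter_upwards [eventually_ge_atTop a] with x hx
  linarith [hmono self_mem_Ici hx hx]

lemma monotoneOn_div_pow_of_hasDerivAt {f f' : ℝ → ℝ} {a : ℝ} (ha : 0 < a) (n : ℕ)
    (hf : ∀ x ∈ Ici a, HasDerivAt f (f' x) x) (hf' : ∀ x ∈ Ioi a, n * f x ≤ x * f' x) :
    MonotoneOn (fun x => f x / x ^ n) (Ici a) := by
  refine monotoneOn_Ici_of_hasDerivAt_nonneg
    (fun x hx => (hf x hx).div (hasDerivAt_pow n x) (pow_pos (ha.trans_le hx) n).ne') ?_
  intro x hx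
  have hx0 : 0 < x := ha.trans hx
  have hpow : x * x ^ (n - 1) * n = x ^ n * n := by
    cases n with
    | zero => simp
    | succ n => rw [Nat.add_sub_cancel, pow_succ]; ring
  have hnum : x * (f' x * x ^ n - f x * (n * x ^ (n - 1))) = x ^ n * (x * f' x - n * f x) := by
    linear_combination (-f x) * hpow
  refine div_nonneg ((mul_nonneg_iff_of_pos_left hx0).1 ?_) (by positivity)
  rw [hnum]
  exact mul_nonneg (by positivity) (sub_nonneg.2 (hf' x hx))

section SelfSimilarProfile

variable {cl : ℝ} {Uh Wh ρh Uh' Wh' ρh' : ℝ → ℝ}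

lemma monotoneOn_Wh_of_neg (hcl : 2 < cl)
    (hW : ∀ η ∈ Ioi (0 : ℝ), HasDerivAt Wh (Wh' η) η ∧
      Wh' η = -Wh η / (η * (1 + Uh η / cl)) +
        (1 - 2 / cl) * ρh η / ((1 + Uh η / cl) ^ 2 * η ^ 3))
    (hWpos : ∀ η ∈ Ioi (0 : ℝ), 0 < Wh η) (hρpos : ∀ η ∈ Ioi (0 : ℝ), 0 < ρh η)
    (hneg : ∀ η ∈ Ioi (0 : ℝ), 1 + Uh η / cl < 0) :
    MonotoneOn Wh (Ici 1) := by
  refine monotoneOn_Ici_of_hasDerivAt_nonneg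
    (fun x hx => (hW x (zero_lt_one.trans_le (mem_Ici.1 hx))).1) fun x hx => ?_
  have hx0 : (0 : ℝ) < x := zero_lt_one.trans (mem_Ioi.1 hx)
  have hk : 0 < 1 - 2 / cl := by rw [sub_pos, div_lt_one (by linarith)]; exact hcl
  have hdamp : 0 < -Wh x / (x * (1 + Uh x / cl)) :=
    div_pos_of_neg_of_neg (neg_neg_of_pos (hWpos x hx0)) (mul_neg_of_pos_of_neg hx0 (hneg x hx0))
  have hforce : 0 < (1 - 2 / cl) * ρh x / ((1 + Uh x / cl) ^ 2 * x ^ 3) :=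
    div_pos (mul_pos hk (hρpos x hx0)) (mul_pos (sq_pos_of_neg (hneg x hx0)) (pow_pos hx0 3))
  rw [(hW x hx0).2]
  linarith

lemma hasDerivAt_Wh_add_log (hcl : cl ≠ 0)
    (hW : ∀ η ∈ Ioi (0 : ℝ), HasDerivAt Wh (Wh' η) η ∧
      Wh' η = -Wh η / (η * (1 + Uh η / cl)) +
        (1 - 2 / cl) * ρh η / ((1 + Uh η / cl) ^ 2 * η ^ 3))
    (hU : ∀ η ∈ Ioi (0 : ℝ), HasDerivAt Uh (Uh' η) η ∧ Uh' η = cl * Wh η / η)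
    {η : ℝ} (hη : 0 < η) (hs : 1 + Uh η / cl ≠ 0) :
    HasDerivAt (fun x => Wh x + log (1 + Uh x / cl))
      ((1 - 2 / cl) * ρh η / ((1 + Uh η / cl) ^ 2 * η ^ 3)) η := by
  refine ((hW η hη).1.add (((hU η hη).1.div_const cl).const_add 1 |>.log hs)).congr_deriv ?_
  rw [(hW η hη).2, (hU η hη).2]
  field_simp
  ring

lemma rho_one_mul_sq_le
    (hρ : ∀ η ∈ Ioi (0 : ℝ), HasDerivAt ρh (ρh' η) η ∧
      ρh' η = (2 / cl - 1) * ρh η * Uh η / (η * (1 + Uh η / cl)))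
    (hρpos : ∀ η ∈ Ioi (0 : ℝ), 0 < ρh η) (hUle : ∀ η ∈ Ioi (0 : ℝ), Uh η ≤ -2)
    (hpos : ∀ η ∈ Ioi (0 : ℝ), 0 < 1 + Uh η / cl) {x : ℝ} (hx : 1 ≤ x) :
    ρh 1 * x ^ 2 ≤ ρh x := by
  have hmono := monotoneOn_div_pow_of_hasDerivAt one_pos 2
    (fun y hy => (hρ y (zero_lt_one.trans_le (mem_Ici.1 hy))).1) fun y hy => by
      have hy0 : (0 : ℝ) < y := zero_lt_one.trans (mem_Ioi.1 hy)
      have hs := hpos y hy0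
      rw [(hρ y hy0).2, mul_div_assoc', le_div_iff₀ (mul_pos hy0 hs)]
      have hgap : 0 ≤ ρh y * (-Uh y - 2) :=
        mul_nonneg (hρpos y hy0).le (by linarith [hUle y hy0])
      linear_combination y * hgap
  have h : ρh 1 / 1 ^ 2 ≤ ρh x / x ^ 2 := hmono self_mem_Ici (mem_Ici.2 hx) hx
  rwa [one_pow, div_one, le_div_iff₀ (by positivity)] at h

lemma tendsto_Wh_atTop_of_pos (hcl : 2 < cl)
    (hρ : ∀ η ∈ Ioi (0 : ℝ), HasDerivAt ρh (ρh' η) η ∧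
      ρh' η = (2 / cl - 1) * ρh η * Uh η / (η * (1 + Uh η / cl)))
    (hW : ∀ η ∈ Ioi (0 : ℝ), HasDerivAt Wh (Wh' η) η ∧
      Wh' η = -Wh η / (η * (1 + Uh η / cl)) +
        (1 - 2 / cl) * ρh η / ((1 + Uh η / cl) ^ 2 * η ^ 3))
    (hU : ∀ η ∈ Ioi (0 : ℝ), HasDerivAt Uh (Uh' η) η ∧ Uh' η = cl * Wh η / η)
    (hρpos : ∀ η ∈ Ioi (0 : ℝ), 0 < ρh η) (hUle : ∀ η ∈ Ioi (0 : ℝ), Uh η ≤ -2)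
    (hpos : ∀ η ∈ Ioi (0 : ℝ), 0 < 1 + Uh η / cl) :
    Tendsto Wh atTop atTop := by
  have hcl0 : 0 < cl := by linarith
  have hk : 0 < 1 - 2 / cl := by rw [sub_pos, div_lt_one hcl0]; exact hcl
  have hsk : ∀ η ∈ Ioi (0 : ℝ), 1 + Uh η / cl ≤ 1 - 2 / cl := fun η hη => by
    have := div_le_div_of_nonneg_right (hUle η hη) hcl0.le
    rw [neg_div] at this
    linarith
  have hsum : Tendsto (fun η => Wh η + log (1 + Uh η / cl)) atTop atTop := by
    have hρ1 := hρpos 1 (mem_Ioi.2 one_pos)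
    refine tendsto_atTop_of_div_le_hasDerivAt (c := ρh 1 / (1 - 2 / cl))
      (f' := fun η => (1 - 2 / cl) * ρh η / ((1 + Uh η / cl) ^ 2 * η ^ 3)) (by positivity) ?_
    filter_upwards [eventually_ge_atTop 1] with x hx
    have hx0 : (0 : ℝ) < x := zero_lt_one.trans_le hx
    refine ⟨hasDerivAt_Wh_add_log hcl0.ne' hW hU hx0 (hpos x hx0).ne', ?_⟩
    have hs := hpos x hx0
    calc ρh 1 / (1 - 2 / cl) / x
        = (1 - 2 / cl) * (ρh 1 * x ^ 2) / ((1 - 2 / cl) ^ 2 * x ^ 3) := by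
          field_simp
      _ ≤ (1 - 2 / cl) * ρh x / ((1 + Uh x / cl) ^ 2 * x ^ 3) := by
          gcongr
          · exact (mul_pos hk (hρpos x hx0)).le
          · exact rho_one_mul_sq_le hρ hρpos hUle hpos hx
          · exact hsk x hx0
  refine tendsto_atTop_mono' _ ?_ (tendsto_atTop_add_const_right _ (-log (1 - 2 / cl)) hsum)
  filter_upwards [eventually_gt_atTop 0] with x hx
  linarith [log_le_log (hpos x hx) (hsk x hx)]

end SelfSimilarProfile

theorem stmt8_general (cl : ℝ) (hcl : 2 < cl) (Uh Wh ρh Uh' Wh' ρh' : ℝ → ℝ)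
    (hden : ∀ η ∈ Set.Ioi (0 : ℝ), 1 + Uh η / cl ≠ 0)
    (hρ : ∀ η ∈ Set.Ioi (0 : ℝ), HasDerivAt ρh (ρh' η) η ∧
      ρh' η = (2 / cl - 1) * ρh η * Uh η / (η * (1 + Uh η / cl)))
    (hW : ∀ η ∈ Set.Ioi (0 : ℝ), HasDerivAt Wh (Wh' η) η ∧
      Wh' η = -Wh η / (η * (1 + Uh η / cl)) +
        (1 - 2 / cl) * ρh η / ((1 + Uh η / cl) ^ 2 * η ^ 3))
    (hU : ∀ η ∈ Set.Ioi (0 : ℝ), HasDerivAt Uh (Uh' η) η ∧ Uh' η = cl * Wh η / η)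
    (hWpos : ∀ η ∈ Set.Ioi (0 : ℝ), 0 < Wh η)
    (hρpos : ∀ η ∈ Set.Ioi (0 : ℝ), 0 < ρh η)
    (hUle : ∀ η ∈ Set.Ioi (0 : ℝ), Uh η ≤ -2) :
    False := by
  have hs_cont : ContinuousOn (fun η => 1 + Uh η / cl) (Ioi 0) := fun η hη =>
    (((hU η hη).1.continuousAt.div_const cl).const_add 1).continuousWithinAt
  obtain ⟨δ, hδ, hWδ⟩ : ∃ δ > 0, ∀ᶠ η in atTop, δ ≤ Wh η := by
    rcases isPreconnected_Ioi.forall_neg_or_forall_pos hs_cont hden with hneg | hpos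
    · exact ⟨Wh 1, hWpos 1 (mem_Ioi.2 one_pos), eventually_atTop.2 ⟨1, fun η hη =>
        monotoneOn_Wh_of_neg hcl hW hWpos hρpos hneg self_mem_Ici (mem_Ici.2 hη) hη⟩⟩
    · exact ⟨1, one_pos,
        (tendsto_Wh_atTop_of_pos hcl hρ hW hU hρpos hUle hpos).eventually_ge_atTop 1⟩
  have hUtop : Tendsto Uh atTop atTop := by
    refine tendsto_atTop_of_div_le_hasDerivAt (f' := Uh') (c := cl * δ)
      (mul_pos (by linarith) hδ) ?_
    filter_upwards [hWδ, eventually_gt_atTop 0] with η hWη hη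
    refine ⟨(hU η hη).1, ?_⟩
    rw [(hU η hη).2]
    gcongr
  obtain ⟨η, hUη, hη⟩ := ((hUtop.eventually_gt_atTop (-2)).and (eventually_gt_atTop 0)).exists
  linarith [hUle η hη]

/-- If the transformed profile Û stayed ≤ -2 everywhere, a contradiction would
follow; hence G(c_l) > -2. -/
theorem stmt8 (cl : ℝ) (hcl : 2 < cl) (Uh Wh ρh Uh' Wh' ρh' : ℝ → ℝ)
    (hden : ∀ η ∈ Set.Ioi (0 : ℝ), 1 + Uh η / cl ≠ 0)
    (hρ : ∀ η ∈ Set.Ioi (0 : ℝ), HasDerivAt ρh (ρh' η) η ∧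
      ρh' η = (2 / cl - 1) * ρh η * Uh η / (η * (1 + Uh η / cl)))
    (hW : ∀ η ∈ Set.Ioi (0 : ℝ), HasDerivAt Wh (Wh' η) η ∧
      Wh' η = -Wh η / (η * (1 + Uh η / cl)) +
        (1 - 2 / cl) * ρh η / ((1 + Uh η / cl) ^ 2 * η ^ 3))
    (hU : ∀ η ∈ Set.Ioi (0 : ℝ), HasDerivAt Uh (Uh' η) η ∧ Uh' η = cl * Wh η / η)
    (hWpos : ∀ η ∈ Set.Ioi (0 : ℝ), 0 < Wh η)
    (hρpos : ∀ η ∈ Set.Ioi (0 : ℝ), 0 < ρh η)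
    (hmono : MonotoneOn Uh (Set.Ioi (0 : ℝ)))
    (hUle : ∀ η ∈ Set.Ioi (0 : ℝ), Uh η ≤ -2) :
    False :=
  stmt8_general cl hcl Uh Wh ρh Uh' Wh' ρh' hden hρ hW hU hWpos hρpos hUle
end

section
/- Let c_l > 2, s ≥ 2, h > 0, η₀ > 0, and suppose ρ̃, W̃, Ũ solve on [η₀, η₀+h] the system ρ̃' = ((-3 - c_l)ρ̃Ũ - 5c_lρ̃)/((c_l + Ũ)η), W̃' = (-2c_lW̃ - ŨW̃)/((c_l + Ũ)η) + c_l(c_l - 2)ρ̃η/(c_l + Ũ)², Ũ' = c_lW̃, with ρ̃ > 0, W̃ > 0, Ũ nondecreasing, and c_l + Ũ > 0 and the a priori bound Ũ ≥ ((1-s)c_l - 2)/s so that (2/c_l - 1)Ũ/(1 + Ũ/c_l) ≤ s c_l - c_l pointwise. Then for η ∈ [η₀, η₀+h]: ρ̃(η) ≤ ρ̃(η₀)·η₀^{c_l - sc_l}·(η₀+h)^{sc_l - c_l} and ρ̃(η) ≥ ρ̃(η₀)·η₀^{3+c_l}·(η₀+h)^{-3-c_l}. -/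
/-!
Both bounds come from the Euler operator `x d/dx` applied to the density equation.
Since `(-3 - c) U - 5 c + (3 + c)(c + U) = c (c - 2)`, one has
`η ρ̃' + (3 + c) ρ̃ = c (c - 2) ρ̃ / (c + Ũ) ≥ 0`, so `ρ̃ η^(3+c)` is nondecreasing.
Since `(-3 - c) U - 5 c = (2 - c) U - 5 (c + U)`, one has
`η ρ̃' = ρ̃ ((2 - c) Ũ / (c + Ũ) - 5) ≤ (s c - c) ρ̃` by the pointwise bound, so
`ρ̃ η^(c - s c)` is nonincreasing. Comparing with the value at `η₀` and bounding the powers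
of `η` by those of `η₀ + h` gives the two estimates.
-/

open Set

section EulerOperator

variable {f f' : ℝ → ℝ} {a b p : ℝ}

theorem monotoneOn_mul_rpow_of_hasDerivAt (ha : 0 < a)
    (hf : ∀ x ∈ Icc a b, HasDerivAt f (f' x) x)
    (hsign : ∀ x ∈ Icc a b, 0 ≤ f' x * x + p * f x) :
    MonotoneOn (fun x => f x * x ^ p) (Icc a b) := by
  have hderiv : ∀ x ∈ Icc a b,
      HasDerivAt (fun x => f x * x ^ p) (x ^ (p - 1) * (f' x * x + p * f x)) x := by
    intro x hx
    have hx₀ : 0 < x := ha.trans_le hx.1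
    refine ((hf x hx).mul (Real.hasDerivAt_rpow_const (p := p) (Or.inl hx₀.ne'))).congr_deriv ?_
    rw [show x ^ p = x ^ (p - 1) * x by rw [← Real.rpow_add_one hx₀.ne', sub_add_cancel]]
    ring
  refine monotoneOn_of_deriv_nonneg (convex_Icc a b)
    (fun x hx => (hderiv x hx).continuousAt.continuousWithinAt)
    (fun x hx => ?_) (fun x hx => ?_) <;> rw [interior_Icc] at hx
  · exact (hderiv x (Ioo_subset_Icc_self hx)).differentiableAt.differentiableWithinAt
  · rw [(hderiv x (Ioo_subset_Icc_self hx)).deriv]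
    exact mul_nonneg (Real.rpow_nonneg (ha.trans hx.1).le _) (hsign x (Ioo_subset_Icc_self hx))

theorem antitoneOn_mul_rpow_of_hasDerivAt (ha : 0 < a)
    (hf : ∀ x ∈ Icc a b, HasDerivAt f (f' x) x)
    (hsign : ∀ x ∈ Icc a b, f' x * x + p * f x ≤ 0) :
    AntitoneOn (fun x => f x * x ^ p) (Icc a b) := by
  have := monotoneOn_mul_rpow_of_hasDerivAt (f := -f) (f' := -f') (p := p) ha
    (fun x hx => (hf x hx).neg) fun x hx => by
      simp only [Pi.neg_apply]
      linarith [hsign x hx]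
  exact fun x hx y hy hxy => by simpa using this hx hy hxy

theorem le_of_monotoneOn_mul_rpow (ha : 0 < a) (hp : 0 ≤ p)
    (hf : MonotoneOn (fun x => f x * x ^ p) (Icc a b)) (hpos : ∀ x ∈ Icc a b, 0 ≤ f x)
    {x : ℝ} (hx : x ∈ Icc a b) :
    f a * a ^ p * b ^ (-p) ≤ f x := by
  have hb : 0 < b := ha.trans_le (hx.1.trans hx.2)
  rw [Real.rpow_neg hb.le, ← div_eq_mul_inv, div_le_iff₀ (Real.rpow_pos_of_pos hb p)]
  calc f a * a ^ p ≤ f x * x ^ p := hf (left_mem_Icc.2 (hx.1.trans hx.2)) hx hx.1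
    _ ≤ f x * b ^ p :=
      mul_le_mul_of_nonneg_left (Real.rpow_le_rpow (ha.trans_le hx.1).le hx.2 hp) (hpos x hx)

theorem le_of_antitoneOn_mul_rpow_neg (ha : 0 < a) (hp : 0 ≤ p)
    (hf : AntitoneOn (fun x => f x * x ^ (-p)) (Icc a b)) (hpos : 0 ≤ f a)
    {x : ℝ} (hx : x ∈ Icc a b) :
    f x ≤ f a * a ^ (-p) * b ^ p := by
  have hx₀ : 0 < x := ha.trans_le hx.1
  have hxp : 0 < x ^ p := Real.rpow_pos_of_pos hx₀ p
  calc f x = f x * x ^ (-p) * x ^ p := by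
        rw [Real.rpow_neg hx₀.le, mul_assoc, inv_mul_cancel₀ hxp.ne', mul_one]
    _ ≤ f a * a ^ (-p) * x ^ p :=
        mul_le_mul_of_nonneg_right (hf (left_mem_Icc.2 (hx.1.trans hx.2)) hx hx.1) hxp.le
    _ ≤ f a * a ^ (-p) * b ^ p :=
        mul_le_mul_of_nonneg_left (Real.rpow_le_rpow hx₀.le hx.2 hp)
          (mul_nonneg hpos (Real.rpow_nonneg ha.le _))

end EulerOperator

section DensityEquation

variable {c U ρ ρ' x : ℝ}

theorem density_eq_mul_add_nonneg (hc : 2 < c) (hden : 0 < c + U) (hx : x ≠ 0) (hρ : 0 ≤ ρ)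
    (hρ' : ρ' = ((-3 - c) * ρ * U - 5 * c * ρ) / ((c + U) * x)) :
    0 ≤ ρ' * x + (3 + c) * ρ := by
  have key : ρ' * x + (3 + c) * ρ = ρ * c * (c - 2) / (c + U) := by
    rw [hρ']
    field_simp
    ring
  rw [key]
  exact div_nonneg (mul_nonneg (mul_nonneg hρ (by linarith)) (by linarith)) hden.le

theorem density_eq_mul_sub_nonpos {q : ℝ} (hc : c ≠ 0) (hden : 0 < c + U) (hx : x ≠ 0)
    (hρ : 0 ≤ ρ) (hρ' : ρ' = ((-3 - c) * ρ * U - 5 * c * ρ) / ((c + U) * x))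
    (hq : (2 / c - 1) * U / (1 + U / c) ≤ q) :
    ρ' * x + -q * ρ ≤ 0 := by
  have hrate : (2 / c - 1) * U / (1 + U / c) = (2 - c) * U / (c + U) := by
    rw [div_eq_div_iff (by field_simp; positivity) hden.ne']
    field_simp
  have key : ρ' * x = ρ * ((2 - c) * U / (c + U) - 5) := by
    rw [hρ']
    field_simp
    ring
  rw [key, ← hrate]
  nlinarith [mul_le_mul_of_nonneg_left hq hρ]

end DensityEquation

theorem stmt13_general (cl : ℝ) (s : ℕ) (η₀ h : ℝ) (hcl : 2 < cl) (hs : 2 ≤ s)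
    (hη₀ : 0 < η₀)
    (ρt Ut ρt' : ℝ → ℝ)
    (hden : ∀ η ∈ Set.Icc η₀ (η₀ + h), 0 < cl + Ut η)
    (hρ : ∀ η ∈ Set.Icc η₀ (η₀ + h), HasDerivAt ρt (ρt' η) η ∧
      ρt' η = ((-3 - cl) * ρt η * Ut η - 5 * cl * ρt η) / ((cl + Ut η) * η))
    (hρpos : ∀ η ∈ Set.Icc η₀ (η₀ + h), 0 < ρt η)
    (hptw : ∀ η ∈ Set.Icc η₀ (η₀ + h),
      (2 / cl - 1) * Ut η / (1 + Ut η / cl) ≤ (s : ℝ) * cl - cl) :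
    ∀ η ∈ Set.Icc η₀ (η₀ + h),
      ρt η ≤ ρt η₀ * η₀ ^ (cl - s * cl) * (η₀ + h) ^ ((s : ℝ) * cl - cl) ∧
      ρt η₀ * η₀ ^ (3 + cl) * (η₀ + h) ^ (-3 - cl) ≤ ρt η := by
  intro η hη
  have hne : ∀ x ∈ Icc η₀ (η₀ + h), x ≠ 0 := fun x hx => (hη₀.trans_le hx.1).ne'
  have hexp : 0 ≤ (s : ℝ) * cl - cl := by
    nlinarith [show (2 : ℝ) ≤ s by exact_mod_cast hs]
  have hdecr := antitoneOn_mul_rpow_of_hasDerivAt hη₀ (fun x hx => (hρ x hx).1)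
    fun x hx => density_eq_mul_sub_nonpos (by linarith) (hden x hx) (hne x hx)
      (hρpos x hx).le (hρ x hx).2 (hptw x hx)
  have hincr := monotoneOn_mul_rpow_of_hasDerivAt hη₀ (fun x hx => (hρ x hx).1)
    fun x hx => density_eq_mul_add_nonneg hcl (hden x hx) (hne x hx) (hρpos x hx).le (hρ x hx).2
  constructor
  · have := le_of_antitoneOn_mul_rpow_neg hη₀ hexp hdecr
      (hρpos η₀ (left_mem_Icc.2 (hη.1.trans hη.2))).le hη
    rwa [neg_sub] at this
  · have := le_of_monotoneOn_mul_rpow hη₀ (by linarith) hincr (fun x hx => (hρpos x hx).le) hη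
    rwa [neg_add'] at this

/-- A priori bounds for ρ̃ on a single time step [η₀, η₀+h] of the rescaled
self-similar ODE system. -/
theorem stmt13 (cl : ℝ) (s : ℕ) (η₀ h : ℝ) (hcl : 2 < cl) (hs : 2 ≤ s)
    (hη₀ : 0 < η₀) (hh : 0 < h)
    (ρt Wt Ut ρt' Wt' Ut' : ℝ → ℝ)
    (hden : ∀ η ∈ Set.Icc η₀ (η₀ + h), 0 < cl + Ut η)
    (hρ : ∀ η ∈ Set.Icc η₀ (η₀ + h), HasDerivAt ρt (ρt' η) η ∧
      ρt' η = ((-3 - cl) * ρt η * Ut η - 5 * cl * ρt η) / ((cl + Ut η) * η))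
    (hW : ∀ η ∈ Set.Icc η₀ (η₀ + h), HasDerivAt Wt (Wt' η) η ∧
      Wt' η = (-2 * cl * Wt η - Ut η * Wt η) / ((cl + Ut η) * η) +
        cl * (cl - 2) * ρt η * η / (cl + Ut η) ^ 2)
    (hU : ∀ η ∈ Set.Icc η₀ (η₀ + h), HasDerivAt Ut (Ut' η) η ∧ Ut' η = cl * Wt η)
    (hρpos : ∀ η ∈ Set.Icc η₀ (η₀ + h), 0 < ρt η)
    (hWpos : ∀ η ∈ Set.Icc η₀ (η₀ + h), 0 < Wt η)
    (hmono : MonotoneOn Ut (Set.Icc η₀ (η₀ + h)))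
    (hUlb : ∀ η ∈ Set.Icc η₀ (η₀ + h), ((1 - (s : ℝ)) * cl - 2) / s ≤ Ut η)
    (hptw : ∀ η ∈ Set.Icc η₀ (η₀ + h),
      (2 / cl - 1) * Ut η / (1 + Ut η / cl) ≤ (s : ℝ) * cl - cl) :
    ∀ η ∈ Set.Icc η₀ (η₀ + h),
      ρt η ≤ ρt η₀ * η₀ ^ (cl - s * cl) * (η₀ + h) ^ ((s : ℝ) * cl - cl) ∧
      ρt η₀ * η₀ ^ (3 + cl) * (η₀ + h) ^ (-3 - cl) ≤ ρt η :=
  stmt13_general cl s η₀ h hcl hs hη₀ ρt Ut ρt' hden hρ hρpos hptw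
end
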